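/- arXiv:1610.09109 — 4 statements merged into one kernel-verified Lean document; each statement's English description precedes it below -/
import Mathlib

section
/- Let A = (A_j)_{j≥1} be a partition of ℝ^d into cubes of side length s ∈ (0,1] and X := [-1,1]^d, and let r ≥ s/2. If X_0 = ∂_X X_1 = ∂_X X_{-1}, then X ⊂ N_r ∪ F_r. -/
open MeasureTheory Set Metric
open scoped Classical ENNReal NNReal

noncomputable section

namespace RefinedMargin

abbrev Pt (d : ℕ) := Fin d → ℝ

/-- The input space `X = [-1,1]^d` (with the supremum norm coming from `Fin d → ℝ`). -/
def cubeX (d : ℕ) : Set (Pt d) := Set.Icc (fun _ => (-1 : ℝ)) (fun _ => (1 : ℝ))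

variable {d : ℕ} {s : ℝ}

/-- `X_1 = {x ∈ X : η x > 1/2}`. -/
def X1 (η : Pt d → ℝ) : Set (Pt d) := {x | x ∈ cubeX d ∧ 1 / 2 < η x}

/-- `X_{-1} = {x ∈ X : η x < 1/2}`. -/
def Xm1 (η : Pt d → ℝ) : Set (Pt d) := {x | x ∈ cubeX d ∧ η x < 1 / 2}

/-- `X_0 = {x ∈ X : η x = 1/2}`. -/
def X0 (η : Pt d → ℝ) : Set (Pt d) := {x | x ∈ cubeX d ∧ η x = 1 / 2}

/-- Distance to the decision boundary. -/
def Δ (η : Pt d → ℝ) (x : Pt d) : ℝ :=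
  if x ∈ Xm1 η then Metric.infDist x (X1 η)
  else if x ∈ X1 η then Metric.infDist x (Xm1 η)
  else 0

/-- Relative boundary of `T` in `X`. -/
def relBoundary (X T : Set (Pt d)) : Set (Pt d) := closure T ∩ closure (X \ T) ∩ X

/-- `T` is `m`-rectifiable: the image of a bounded subset of `ℝ^m` under a Lipschitz map. -/
def IsRectifiable (m : ℕ) (T : Set (Pt d)) : Prop :=
  ∃ (B : Set (Fin m → ℝ)) (g : (Fin m → ℝ) → Pt d) (K : NNReal),
    Bornology.IsBounded B ∧ LipschitzOnWith K g B ∧ g '' B = T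

/-- Margin exponent `α` with constant `cME`. -/
def HasME (μ : Measure (Pt d)) (η : Pt d → ℝ) (α cME : ℝ) : Prop :=
  ∀ t : ℝ, 0 < t → μ {x | Δ η x < t} ≤ ENNReal.ofReal ((cME * t) ^ α)

/-- Margin-noise exponent `β` with constant `cMNE`. -/
def HasMNE (μ : Measure (Pt d)) (η : Pt d → ℝ) (β cMNE : ℝ) : Prop :=
  ∀ t : ℝ, 0 < t → (∫ x in {x | Δ η x < t}, |2 * η x - 1| ∂μ) ≤ (cMNE * t) ^ β

/-- The distance to the decision boundary controls the noise from below with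
exponent `γ` and constant `cLC`. -/
def LowerControl (μ : Measure (Pt d)) (η : Pt d → ℝ) (γ cLC : ℝ) : Prop :=
  ∀ᵐ x ∂μ, Δ η x ^ γ ≤ cLC * |2 * η x - 1|

/-- A partition of `ℝ^d` into (half-open) cubes of side length `s`. -/
structure CubePartition (d : ℕ) (s : ℝ) where
  cell : ℕ → Set (Pt d)
  isCube : ∀ j, ∃ a : Pt d, cell j = {x | ∀ i, a i ≤ x i ∧ x i < a i + s}
  covers : ∀ x : Pt d, ∃! j, x ∈ cell j

namespace CubePartition

/-- Index of the unique cell containing `x`. -/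
def idx (𝒜 : CubePartition d s) (x : Pt d) : ℕ := (𝒜.covers x).choose

/-- The unique cell `A(x)` containing `x`. -/
def cellOf (𝒜 : CubePartition d s) (x : Pt d) : Set (Pt d) := 𝒜.cell (𝒜.idx x)

/-- Indices of cells intersecting `X`. -/
def J (𝒜 : CubePartition d s) : Set ℕ := {j | (𝒜.cell j ∩ cubeX d).Nonempty}

/-- Indices of cells near the decision boundary. -/
def JN (𝒜 : CubePartition d s) (η : Pt d → ℝ) (r : ℝ) : Set ℕ :=
  {j | j ∈ 𝒜.J ∧ ∀ x ∈ 𝒜.cell j ∩ cubeX d, Δ η x ≤ 3 * r}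

/-- Indices of cells far from the decision boundary. -/
def JF (𝒜 : CubePartition d s) (η : Pt d → ℝ) (r : ℝ) : Set ℕ :=
  {j | j ∈ 𝒜.J ∧ ∀ x ∈ 𝒜.cell j ∩ cubeX d, r ≤ Δ η x}

/-- `N_r`, the union of the cells near the decision boundary. -/
def Nr (𝒜 : CubePartition d s) (η : Pt d → ℝ) (r : ℝ) : Set (Pt d) := ⋃ j ∈ 𝒜.JN η r, 𝒜.cell j

/-- `F_r`, the union of the cells far from the decision boundary. -/
def Fr (𝒜 : CubePartition d s) (η : Pt d → ℝ) (r : ℝ) : Set (Pt d) := ⋃ j ∈ 𝒜.JF η r, 𝒜.cell j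

end CubePartition

/-- `sign` with the convention `sign 0 = 1`. -/
def sgn (t : ℝ) : ℝ := if 0 ≤ t then 1 else -1

/-- The classification loss `L(y,t) = 1_{(-∞,0]}(y · sign t)`. -/
def cLoss (y t : ℝ) : ℝ := if y * sgn t ≤ 0 then 1 else 0

/-- The restricted classification loss `L_T(x,y,t) = 1_T(x) L(y,t)`. -/
def rLoss (T : Set (Pt d)) (x : Pt d) (y t : ℝ) : ℝ := if x ∈ T then cLoss y t else 0

/-- The joint distribution `P` on `X × {-1,1} ⊆ ℝ^d × ℝ` built from the marginal `μ = P_X`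
and the posterior probability `η`. -/
def joint (μ : Measure (Pt d)) (η : Pt d → ℝ) : Measure (Pt d × ℝ) :=
  μ.bind fun x =>
    ENNReal.ofReal (η x) • Measure.dirac (x, 1) + ENNReal.ofReal (1 - η x) • Measure.dirac (x, -1)

/-- The risk `R_{L_T,P}(f)`. -/
def risk (P : Measure (Pt d × ℝ)) (T : Set (Pt d)) (f : Pt d → ℝ) : ℝ :=
  ∫ z, rLoss T z.1 z.2 (f z.1) ∂P

/-- The Bayes risk `R*_{L_T,P}`, the infimum over all measurable functions. -/
def bayesRisk (P : Measure (Pt d × ℝ)) (T : Set (Pt d)) : ℝ :=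
  ⨅ f : { f : Pt d → ℝ // Measurable f }, risk P T f.1

/-- The Bayes decision function `sign (2η - 1)`. -/
def bayesF (η : Pt d → ℝ) (x : Pt d) : ℝ := sgn (2 * η x - 1)

/-- The empirical risk of `f` on the dataset `D` for the restricted loss `L_T`. -/
def empRisk {n : ℕ} (D : Fin n → Pt d × ℝ) (T : Set (Pt d)) (f : Pt d → ℝ) : ℝ :=
  (∑ i, rLoss T (D i).1 (D i).2 (f (D i).1)) / (n : ℝ)

/-- `f_{D,s}`. -/
def fHat (𝒜 : CubePartition d s) {n : ℕ} (D : Fin n → Pt d × ℝ) (x : Pt d) : ℝ :=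
  ((∑ i, if (D i).2 = 1 ∧ (D i).1 ∈ 𝒜.cellOf x then (1 : ℝ) else 0) -
      ∑ i, if (D i).2 = -1 ∧ (D i).1 ∈ 𝒜.cellOf x then (1 : ℝ) else 0) / (n : ℝ)

/-- The empirical histogram rule `h_{D,s} = sign f_{D,s}`. -/
def histRule (𝒜 : CubePartition d s) {n : ℕ} (D : Fin n → Pt d × ℝ) (x : Pt d) : ℝ :=
  sgn (fHat 𝒜 D x)

/-- `f_{P,s}`. -/
def fBar (𝒜 : CubePartition d s) (P : Measure (Pt d × ℝ)) (x : Pt d) : ℝ :=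
  (P (𝒜.cellOf x ×ˢ ({1} : Set ℝ))).toReal - (P (𝒜.cellOf x ×ˢ ({-1} : Set ℝ))).toReal

/-- The infinite-sample histogram rule `h_{P,s} = sign f_{P,s}`. -/
def histRuleP (𝒜 : CubePartition d s) (P : Measure (Pt d × ℝ)) (x : Pt d) : ℝ :=
  sgn (fBar 𝒜 P x)

/-- The class `𝓕` of `±1`-valued functions which are constant on the cells meeting `X`
(and `0` elsewhere). -/
def histClass (𝒜 : CubePartition d s) : Set (Pt d → ℝ) :=
  {f | ∃ c : ℕ → ℝ, (∀ j, c j = 1 ∨ c j = -1) ∧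
    ∀ x, f x = if 𝒜.idx x ∈ 𝒜.J then c (𝒜.idx x) else 0}

/-- The `n`-fold product measure `P^n`. -/
def Pn (μ : Measure (Pt d)) (η : Pt d → ℝ) (n : ℕ) : Measure (Fin n → Pt d × ℝ) :=
  Measure.pi fun _ => joint μ η

theorem statement2 (d : ℕ) (hd : 1 ≤ d) (s : ℝ) (hs : s ∈ Set.Ioc (0 : ℝ) 1)
    (𝒜 : CubePartition d s) (η : Pt d → ℝ) (r : ℝ) (hr : s / 2 ≤ r)
    (hbd1 : X0 η = relBoundary (cubeX d) (X1 η))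
    (hbd2 : X0 η = relBoundary (cubeX d) (Xm1 η)) :
    cubeX d ⊆ 𝒜.Nr η r ∪ 𝒜.Fr η r := by
  have hr0 : 0 < r := lt_of_lt_of_le (by linarith [hs.1]) hr
  have hs2r : s ≤ 2 * r := by linarith
  intro x hx
  have hxcell : x ∈ 𝒜.cell (𝒜.idx x) := (𝒜.covers x).choose_spec.1
  set j := 𝒜.idx x with hj
  have hJ : j ∈ 𝒜.J := ⟨x, hxcell, hx⟩
  by_cases hF : ∀ y ∈ 𝒜.cell j ∩ cubeX d, r ≤ Δ η y
  · exact Or.inr (Set.mem_biUnion ⟨hJ, hF⟩ hxcell)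
  · push_neg at hF
    obtain ⟨x', hx'mem, hx'Δ⟩ := hF
    obtain ⟨hx'cell, hx'X⟩ := hx'mem
    -- distances to both classes from x' are ≤ r
    have key1 : Metric.infDist x' (X1 η) ≤ r := by
      by_cases h1 : x' ∈ Xm1 η
      · have : Δ η x' = Metric.infDist x' (X1 η) := by simp [Δ, h1]
        linarith [this ▸ hx'Δ]
      · by_cases h2 : x' ∈ X1 η
        · rw [Metric.infDist_zero_of_mem h2]; linarith
        · have h0 : x' ∈ X0 η := by
            refine ⟨hx'X, le_antisymm ?_ ?_⟩
            · by_contra hc; exact h2 ⟨hx'X, lt_of_not_ge hc⟩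
            · by_contra hc; exact h1 ⟨hx'X, lt_of_not_ge hc⟩
          have : x' ∈ closure (X1 η) := by
            rw [hbd1] at h0; exact h0.1.1
          rw [Metric.infDist_zero_of_mem_closure this]; linarith
    have key2 : Metric.infDist x' (Xm1 η) ≤ r := by
      by_cases h2 : x' ∈ X1 η
      · have h1 : x' ∉ Xm1 η := fun h => absurd h2.2 (not_lt.mpr (le_of_lt h.2))
        have : Δ η x' = Metric.infDist x' (Xm1 η) := by simp [Δ, h1, h2]
        linarith [this ▸ hx'Δ]
      · by_cases h1 : x' ∈ Xm1 η
        · rw [Metric.infDist_zero_of_mem h1]; linarith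
        · have h0 : x' ∈ X0 η := by
            refine ⟨hx'X, le_antisymm ?_ ?_⟩
            · by_contra hc; exact h2 ⟨hx'X, lt_of_not_ge hc⟩
            · by_contra hc; exact h1 ⟨hx'X, lt_of_not_ge hc⟩
          have : x' ∈ closure (Xm1 η) := by
            rw [hbd2] at h0; exact h0.1.1
          rw [Metric.infDist_zero_of_mem_closure this]; linarith
    refine Or.inl (Set.mem_biUnion ⟨hJ, ?_⟩ hxcell)
    rintro y ⟨hycell, hyX⟩
    have hdist : dist y x' ≤ s := by
      obtain ⟨a, ha⟩ := 𝒜.isCube j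
      rw [ha] at hycell hx'cell
      rw [dist_pi_le_iff hs.1.le]
      intro i
      rw [Real.dist_eq]
      have h1 := hycell i
      have h2 := hx'cell i
      rw [abs_le]
      constructor <;> linarith [h1.1, h1.2, h2.1, h2.2]
    by_cases hy1 : y ∈ Xm1 η
    · have : Δ η y = Metric.infDist y (X1 η) := by simp [Δ, hy1]
      rw [this]
      calc Metric.infDist y (X1 η) ≤ Metric.infDist x' (X1 η) + dist y x' :=
            Metric.infDist_le_infDist_add_dist
        _ ≤ r + s := add_le_add key1 hdist
        _ ≤ 3 * r := by linarith
    · by_cases hy2 : y ∈ X1 η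
      · have : Δ η y = Metric.infDist y (Xm1 η) := by simp [Δ, hy1, hy2]
        rw [this]
        calc Metric.infDist y (Xm1 η) ≤ Metric.infDist x' (Xm1 η) + dist y x' :=
              Metric.infDist_le_infDist_add_dist
          _ ≤ r + s := add_le_add key2 hdist
          _ ≤ 3 * r := by linarith
      · have : Δ η y = 0 := by simp [Δ, hy1, hy2]
        rw [this]; linarith

end RefinedMargin
end
end

section
/- Let A = (A_j)_{j≥1} be a partition of ℝ^d into cubes of side length s ∈ (0,1], X := [-1,1]^d, r ≥ s/2, and assume X_0 = ∂_X X_1 = ∂_X X_{-1}. Then for every measurable function f : X → ℝ (in particular for the empirical histogram rule h_{D,s}) one has R_{L,P}(f) − R*_{L,P} ≤ (R_{L_{N_r},P}(f) − R*_{L_{N_r},P}) + (R_{L_{F_r},P}(f) − R*_{L_{F_r},P}). -/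
/-!
Both excess risks are integrals of the same nonnegative function, the excess conditional risk
`condRisk η f - condRisk η (bayesF η)`, over `X`, `N_r` and `F_r` respectively, so it suffices
that `N_r ∪ F_r` covers `X`. The boundary assumption puts `X_0` in the closures of both `X_1`
and `X_{-1}`, which makes `Δ_η` 1-Lipschitz at points of `X`. A cube has sup-diameter
`s ≤ 2r`, so a cell containing a point of `X` with `Δ_η < r` has `Δ_η ≤ 3r` throughout, and
every cell meeting `X` is near or far.
-/

open MeasureTheory Set Metric
open scoped Classical ENNReal NNReal

noncomputable section

namespace RefinedMargin

variable {d : ℕ} {s : ℝ}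

section Geometry

variable {η : Pt d → ℝ}

lemma Δ_nonneg (η : Pt d → ℝ) (x : Pt d) : 0 ≤ Δ η x := by
  unfold Δ
  split_ifs <;> first | exact infDist_nonneg | exact le_rfl

lemma mem_X0_of_notMem_X1_of_notMem_Xm1 {x : Pt d} (hx : x ∈ cubeX d) (hx1 : x ∉ X1 η)
    (hxm1 : x ∉ Xm1 η) : x ∈ X0 η :=
  ⟨hx, le_antisymm (not_lt.1 fun h => hx1 ⟨hx, h⟩) (not_lt.1 fun h => hxm1 ⟨hx, h⟩)⟩

lemma mem_closure_X1_of_notMem_Xm1 (hbd1 : X0 η = relBoundary (cubeX d) (X1 η)) {x : Pt d}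
    (hx : x ∈ cubeX d) (hxm1 : x ∉ Xm1 η) : x ∈ closure (X1 η) := by
  by_cases hx1 : x ∈ X1 η
  · exact subset_closure hx1
  · have hx0 := mem_X0_of_notMem_X1_of_notMem_Xm1 hx hx1 hxm1
    rw [hbd1] at hx0
    exact hx0.1.1

lemma mem_closure_Xm1_of_notMem_X1 (hbd2 : X0 η = relBoundary (cubeX d) (Xm1 η)) {x : Pt d}
    (hx : x ∈ cubeX d) (hx1 : x ∉ X1 η) : x ∈ closure (Xm1 η) := by
  by_cases hxm1 : x ∈ Xm1 η
  · exact subset_closure hxm1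
  · have hx0 := mem_X0_of_notMem_X1_of_notMem_Xm1 hx hx1 hxm1
    rw [hbd2] at hx0
    exact hx0.1.1

lemma infDist_X1_le_Δ (hbd1 : X0 η = relBoundary (cubeX d) (X1 η)) {x : Pt d}
    (hx : x ∈ cubeX d) : infDist x (X1 η) ≤ Δ η x := by
  by_cases hxm1 : x ∈ Xm1 η
  · rw [Δ, if_pos hxm1]
  · rw [infDist_zero_of_mem_closure (mem_closure_X1_of_notMem_Xm1 hbd1 hx hxm1)]
    exact Δ_nonneg η x

lemma infDist_Xm1_le_Δ (hbd2 : X0 η = relBoundary (cubeX d) (Xm1 η)) {x : Pt d}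
    (hx : x ∈ cubeX d) : infDist x (Xm1 η) ≤ Δ η x := by
  by_cases hx1 : x ∈ X1 η
  · have hxm1 : x ∉ Xm1 η := fun h => (h.2.trans hx1.2).false
    rw [Δ, if_neg hxm1, if_pos hx1]
  · rw [infDist_zero_of_mem_closure (mem_closure_Xm1_of_notMem_X1 hbd2 hx hx1)]
    exact Δ_nonneg η x

lemma Δ_le_Δ_add_dist (hbd1 : X0 η = relBoundary (cubeX d) (X1 η))
    (hbd2 : X0 η = relBoundary (cubeX d) (Xm1 η)) {x : Pt d} (hx : x ∈ cubeX d) (y : Pt d) :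
    Δ η y ≤ Δ η x + dist y x := by
  conv_lhs => unfold Δ
  split_ifs
  · exact infDist_le_infDist_add_dist.trans (by gcongr; exact infDist_X1_le_Δ hbd1 hx)
  · exact infDist_le_infDist_add_dist.trans (by gcongr; exact infDist_Xm1_le_Δ hbd2 hx)
  · exact add_nonneg (Δ_nonneg η x) dist_nonneg

end Geometry

namespace CubePartition

variable (𝒜 : CubePartition d s)

lemma measurableSet_cell (j : ℕ) : MeasurableSet (𝒜.cell j) := by
  obtain ⟨a, ha⟩ := 𝒜.isCube j
  have hpi : 𝒜.cell j = univ.pi fun i => Ico (a i) (a i + s) := by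
    ext x
    simp [ha, mem_pi]
  rw [hpi]
  exact .univ_pi fun _ => measurableSet_Ico

lemma measurableSet_Nr (η : Pt d → ℝ) (r : ℝ) : MeasurableSet (𝒜.Nr η r) :=
  .biUnion (to_countable _) fun j _ => 𝒜.measurableSet_cell j

lemma measurableSet_Fr (η : Pt d → ℝ) (r : ℝ) : MeasurableSet (𝒜.Fr η r) :=
  .biUnion (to_countable _) fun j _ => 𝒜.measurableSet_cell j

lemma dist_le_of_mem_cell (hs : 0 ≤ s) {j : ℕ} {x y : Pt d} (hx : x ∈ 𝒜.cell j)
    (hy : y ∈ 𝒜.cell j) : dist x y ≤ s := by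
  obtain ⟨a, ha⟩ := 𝒜.isCube j
  rw [ha] at hx hy
  refine (dist_pi_le_iff hs).2 fun i => ?_
  rw [Real.dist_eq, abs_le]
  constructor <;> linarith [hx i, hy i]

variable {η : Pt d → ℝ} {r : ℝ}

lemma mem_JN_or_mem_JF (hbd1 : X0 η = relBoundary (cubeX d) (X1 η))
    (hbd2 : X0 η = relBoundary (cubeX d) (Xm1 η)) (hs : 0 ≤ s) (hr : s ≤ 2 * r) {j : ℕ}
    (hj : j ∈ 𝒜.J) : j ∈ 𝒜.JN η r ∨ j ∈ 𝒜.JF η r := by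
  by_cases hfar : ∀ x ∈ 𝒜.cell j ∩ cubeX d, r ≤ Δ η x
  · exact .inr ⟨hj, hfar⟩
  push Not at hfar
  obtain ⟨x, ⟨hxj, hx⟩, hxr⟩ := hfar
  refine .inl ⟨hj, fun y ⟨hyj, _⟩ => ?_⟩
  linarith [Δ_le_Δ_add_dist hbd1 hbd2 hx y, 𝒜.dist_le_of_mem_cell hs hyj hxj]

lemma cubeX_subset_Nr_union_Fr (hbd1 : X0 η = relBoundary (cubeX d) (X1 η))
    (hbd2 : X0 η = relBoundary (cubeX d) (Xm1 η)) (hs : 0 ≤ s) (hr : s ≤ 2 * r) :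
    cubeX d ⊆ 𝒜.Nr η r ∪ 𝒜.Fr η r := by
  intro x hx
  obtain ⟨j, hxj, -⟩ := 𝒜.covers x
  rcases 𝒜.mem_JN_or_mem_JF hbd1 hbd2 hs hr ⟨x, hxj, hx⟩ with hjN | hjF
  · exact .inl (mem_biUnion hjN hxj)
  · exact .inr (mem_biUnion hjF hxj)

end CubePartition

section Risk

variable {η : Pt d → ℝ}

/-- The conditional probability, given `x`, that `sgn (f x)` misclassifies the label. -/
def condRisk (η f : Pt d → ℝ) (x : Pt d) : ℝ := if 0 ≤ f x then 1 - η x else η x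

lemma measurable_sgn : Measurable sgn :=
  Measurable.ite measurableSet_Ici measurable_const measurable_const

lemma measurable_bayesF (hmeasη : Measurable η) : Measurable (bayesF η) :=
  measurable_sgn.comp ((measurable_const.mul hmeasη).sub measurable_const)

lemma measurable_condRisk (hmeasη : Measurable η) {f : Pt d → ℝ} (hf : Measurable f) :
    Measurable (condRisk η f) :=
  Measurable.ite (measurableSet_le measurable_const hf) (measurable_const.sub hmeasη) hmeasη

lemma condRisk_mem_Icc (hη : ∀ x, η x ∈ Icc (0 : ℝ) 1) (f : Pt d → ℝ) (x : Pt d) :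
    condRisk η f x ∈ Icc (0 : ℝ) 1 := by
  obtain ⟨h0, h1⟩ := hη x
  unfold condRisk
  split_ifs <;> constructor <;> linarith

lemma condRisk_bayesF_le (η f : Pt d → ℝ) (x : Pt d) :
    condRisk η (bayesF η) x ≤ condRisk η f x := by
  unfold condRisk bayesF sgn
  split_ifs <;> linarith

lemma integrable_condRisk {μ : Measure (Pt d)} [IsFiniteMeasure μ]
    (hη : ∀ x, η x ∈ Icc (0 : ℝ) 1) (hmeasη : Measurable η) {f : Pt d → ℝ}
    (hf : Measurable f) : Integrable (condRisk η f) μ :=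
  .of_mem_Icc 0 1 (measurable_condRisk hmeasη hf).aemeasurable
    (ae_of_all _ (condRisk_mem_Icc hη f))

lemma measurable_rLoss {T : Set (Pt d)} (hT : MeasurableSet T) {f : Pt d → ℝ}
    (hf : Measurable f) : Measurable fun z : Pt d × ℝ => rLoss T z.1 z.2 (f z.1) := by
  have hprod : Measurable fun z : Pt d × ℝ => z.2 * sgn (f z.1) :=
    measurable_snd.mul (measurable_sgn.comp (hf.comp measurable_fst))
  exact Measurable.ite (hT.preimage measurable_fst)
    (Measurable.ite (measurableSet_le hprod measurable_const) measurable_const measurable_const)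
    measurable_const

lemma rLoss_nonneg (T : Set (Pt d)) (x : Pt d) (y t : ℝ) : 0 ≤ rLoss T x y t := by
  unfold rLoss cLoss
  split_ifs <;> norm_num

lemma rLoss_average_eq (T : Set (Pt d)) (f : Pt d → ℝ) (x : Pt d) :
    η x * rLoss T x 1 (f x) + (1 - η x) * rLoss T x (-1) (f x) =
      T.indicator (condRisk η f) x := by
  unfold rLoss cLoss sgn condRisk
  by_cases hx : x ∈ T <;> by_cases hfx : 0 ≤ f x <;> simp [hx, hfx]

lemma measurable_jointKernel (hmeasη : Measurable η) :
    Measurable fun x : Pt d =>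
      ENNReal.ofReal (η x) • Measure.dirac (x, (1 : ℝ)) +
        ENNReal.ofReal (1 - η x) • Measure.dirac (x, (-1 : ℝ)) := by
  refine Measure.measurable_of_measurable_coe _ fun t ht => ?_
  simp only [Measure.coe_add, Pi.add_apply, Measure.smul_apply, smul_eq_mul,
    Measure.dirac_apply' _ ht]
  have hmem (c : ℝ) : Measurable fun x : Pt d => t.indicator (1 : Pt d × ℝ → ℝ≥0∞) (x, c) :=
    (measurable_one.indicator ht).comp (measurable_id.prodMk measurable_const)
  exact ((ENNReal.measurable_ofReal.comp hmeasη).mul (hmem 1)).add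
    ((ENNReal.measurable_ofReal.comp (measurable_const.sub hmeasη)).mul (hmem (-1)))

lemma risk_joint_eq {μ : Measure (Pt d)} (hη : ∀ x, η x ∈ Icc (0 : ℝ) 1)
    (hmeasη : Measurable η) {T : Set (Pt d)} (hT : MeasurableSet T) {f : Pt d → ℝ}
    (hf : Measurable f) : risk (joint μ η) T f = ∫ x in T, condRisk η f x ∂μ := by
  have hL := measurable_rLoss hT hf
  rw [risk, ← integral_indicator hT,
    integral_eq_lintegral_of_nonneg_ae (ae_of_all _ fun z => rLoss_nonneg _ _ _ _)
      hL.aestronglyMeasurable,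
    integral_eq_lintegral_of_nonneg_ae
      (ae_of_all _ (indicator_nonneg fun x _ => (condRisk_mem_Icc hη f x).1))
      ((measurable_condRisk hmeasη hf).indicator hT).aestronglyMeasurable,
    joint, Measure.lintegral_bind (measurable_jointKernel hmeasη).aemeasurable
      hL.ennreal_ofReal.aemeasurable]
  congr 1
  refine lintegral_congr fun x => ?_
  obtain ⟨h0, h1⟩ := hη x
  rw [lintegral_add_measure, lintegral_smul_measure, lintegral_smul_measure,
    lintegral_dirac' _ hL.ennreal_ofReal, lintegral_dirac' _ hL.ennreal_ofReal,
    ← rLoss_average_eq, ENNReal.ofReal_add (mul_nonneg h0 (rLoss_nonneg _ _ _ _))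
      (mul_nonneg (by linarith) (rLoss_nonneg _ _ _ _)),
    ENNReal.ofReal_mul h0, ENNReal.ofReal_mul (by linarith)]
  rfl

lemma bayesRisk_joint_eq {μ : Measure (Pt d)} [IsFiniteMeasure μ]
    (hη : ∀ x, η x ∈ Icc (0 : ℝ) 1) (hmeasη : Measurable η) {T : Set (Pt d)}
    (hT : MeasurableSet T) : bayesRisk (joint μ η) T = risk (joint μ η) T (bayesF η) := by
  have hb := measurable_bayesF hmeasη
  have : Nonempty { f : Pt d → ℝ // Measurable f } := ⟨⟨0, measurable_const⟩⟩
  have hbdd : BddBelow (range fun g : { f : Pt d → ℝ // Measurable f } =>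
      risk (joint μ η) T g.1) := ⟨0, by
    rintro _ ⟨g, rfl⟩
    exact integral_nonneg fun z => rLoss_nonneg _ _ _ _⟩
  refine le_antisymm (ciInf_le hbdd ⟨bayesF η, hb⟩) (le_ciInf fun g => ?_)
  rw [risk_joint_eq hη hmeasη hT hb, risk_joint_eq hη hmeasη hT g.2]
  exact setIntegral_mono (integrable_condRisk hη hmeasη hb).integrableOn
    (integrable_condRisk hη hmeasη g.2).integrableOn (condRisk_bayesF_le η g.1)

lemma risk_sub_bayesRisk_joint_eq {μ : Measure (Pt d)} [IsFiniteMeasure μ]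
    (hη : ∀ x, η x ∈ Icc (0 : ℝ) 1) (hmeasη : Measurable η) {T : Set (Pt d)}
    (hT : MeasurableSet T) {f : Pt d → ℝ} (hf : Measurable f) :
    risk (joint μ η) T f - bayesRisk (joint μ η) T =
      ∫ x in T, (condRisk η f x - condRisk η (bayesF η) x) ∂μ := by
  have hb := measurable_bayesF hmeasη
  rw [bayesRisk_joint_eq hη hmeasη hT, risk_joint_eq hη hmeasη hT hf,
    risk_joint_eq hη hmeasη hT hb, integral_sub (integrable_condRisk hη hmeasη hf).integrableOn
      (integrable_condRisk hη hmeasη hb).integrableOn]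

end Risk

lemma integral_le_setIntegral_add_setIntegral {α : Type*} [MeasurableSpace α] {μ : Measure α}
    {g : α → ℝ} {N F : Set α} (hg : Integrable g μ) (hg0 : 0 ≤ᵐ[μ] g)
    (hcover : ∀ᵐ x ∂μ, x ∈ N ∪ F) :
    ∫ x, g x ∂μ ≤ ∫ x in N, g x ∂μ + ∫ x in F, g x ∂μ := by
  calc ∫ x, g x ∂μ = ∫ x in N ∪ F, g x ∂μ := by rw [Measure.restrict_eq_self_of_ae_mem hcover]
    _ ≤ ∫ x, g x ∂(μ.restrict N + μ.restrict F) :=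
      integral_mono_measure (Measure.restrict_union_le N F)
        (ae_add_measure_iff.2 ⟨ae_restrict_of_ae hg0, ae_restrict_of_ae hg0⟩)
        (hg.restrict.add_measure hg.restrict)
    _ = ∫ x in N, g x ∂μ + ∫ x in F, g x ∂μ := integral_add_measure hg.restrict hg.restrict

theorem statement3_general (d : ℕ) (s : ℝ) (hs : s ∈ Set.Ioc (0 : ℝ) 1)
    (𝒜 : CubePartition d s) (r : ℝ) (hr : s / 2 ≤ r)
    (μ : Measure (Pt d)) [IsProbabilityMeasure μ] (hμX : μ (cubeX d)ᶜ = 0)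
    (η : Pt d → ℝ) (hη : ∀ x, η x ∈ Set.Icc (0 : ℝ) 1) (hmeasη : Measurable η)
    (hbd1 : X0 η = relBoundary (cubeX d) (X1 η))
    (hbd2 : X0 η = relBoundary (cubeX d) (Xm1 η))
    (f : Pt d → ℝ) (hf : Measurable f) :
    risk (joint μ η) Set.univ f - bayesRisk (joint μ η) Set.univ ≤
      (risk (joint μ η) (𝒜.Nr η r) f - bayesRisk (joint μ η) (𝒜.Nr η r)) +
        (risk (joint μ η) (𝒜.Fr η r) f - bayesRisk (joint μ η) (𝒜.Fr η r)) := by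
  have hcover : ∀ᵐ x ∂μ, x ∈ 𝒜.Nr η r ∪ 𝒜.Fr η r :=
    Filter.mem_of_superset (mem_ae_iff.2 hμX)
      (𝒜.cubeX_subset_Nr_union_Fr hbd1 hbd2 hs.1.le (by linarith))
  simp only [risk_sub_bayesRisk_joint_eq hη hmeasη (𝒜.measurableSet_Nr η r) hf,
    risk_sub_bayesRisk_joint_eq hη hmeasη (𝒜.measurableSet_Fr η r) hf,
    risk_sub_bayesRisk_joint_eq hη hmeasη MeasurableSet.univ hf, setIntegral_univ]
  exact integral_le_setIntegral_add_setIntegral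
    ((integrable_condRisk hη hmeasη hf).sub
      (integrable_condRisk hη hmeasη (measurable_bayesF hmeasη)))
    (ae_of_all _ fun x => sub_nonneg.2 (condRisk_bayesF_le η f x)) hcover

theorem statement3 (d : ℕ) (hd : 1 ≤ d) (s : ℝ) (hs : s ∈ Set.Ioc (0 : ℝ) 1)
    (𝒜 : CubePartition d s) (r : ℝ) (hr : s / 2 ≤ r)
    (μ : Measure (Pt d)) [IsProbabilityMeasure μ] (hμX : μ (cubeX d)ᶜ = 0)
    (η : Pt d → ℝ) (hη : ∀ x, η x ∈ Set.Icc (0 : ℝ) 1) (hmeasη : Measurable η)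
    (hbd1 : X0 η = relBoundary (cubeX d) (X1 η))
    (hbd2 : X0 η = relBoundary (cubeX d) (Xm1 η))
    (f : Pt d → ℝ) (hf : Measurable f) :
    risk (joint μ η) Set.univ f - bayesRisk (joint μ η) Set.univ ≤
      (risk (joint μ η) (𝒜.Nr η r) f - bayesRisk (joint μ η) (𝒜.Nr η r)) +
        (risk (joint μ η) (𝒜.Fr η r) f - bayesRisk (joint μ η) (𝒜.Fr η r)) :=
  statement3_general d s hs 𝒜 r hr μ hμX η hη hmeasη hbd1 hbd2 f hf

end RefinedMargin
end
end

section
/- Let X := [-1,1]^d and P a probability measure on X × {-1,1} with fixed posterior version η. If η is Hölder-continuous with exponent γ ∈ (0,1], i.e. there is c > 0 with |η(x) − η(x')| ≤ c ‖x − x'‖_∞^γ for all x, x' ∈ X, then Δ_η controls the noise from above with exponent γ: with c_UC := 2c one has |2η(x) − 1| ≤ c_UC Δ_η(x)^γ for all x ∈ X. -/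
/-! Hölder continuity gives `|2η x - 1| ≤ 2|η x - η y| ≤ 2c‖x - y‖^γ` whenever `η x` and `η y` lie
on opposite sides of `1/2`. Since `t ↦ K t^γ` is an order isomorphism of `[0,∞]`, this bound
passes to the infimum over the opposite class, including the case where that class is empty
and `Δ_η x = ∞`. -/

open MeasureTheory Set Metric
open scoped Classical ENNReal NNReal

noncomputable section

namespace RefinedMargin

variable {d : ℕ} {s : ℝ}

/-- Distance to the decision boundary, with values in `[0,∞]` and the convention
`inf ∅ = ∞`. -/
def De {d : ℕ} (η : Pt d → ℝ) (x : Pt d) : ℝ≥0∞ :=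
  if x ∈ Xm1 η then EMetric.infEdist x (X1 η)
  else if x ∈ X1 η then EMetric.infEdist x (Xm1 η)
  else 0

end RefinedMargin

theorem le_mul_infEDist_rpow {α : Type*} [PseudoEMetricSpace α] {x : α} {A : Set α}
    {b K : ℝ≥0∞} {γ : ℝ} (hK₀ : K ≠ 0) (hK : K ≠ ∞) (hγ : 0 < γ)
    (h : ∀ y ∈ A, b ≤ K * edist x y ^ γ) : b ≤ K * infEDist x A ^ γ := by
  have key : ∀ t : ℝ≥0∞, b ≤ K * t ^ γ ↔ (b / K) ^ γ⁻¹ ≤ t := fun t => by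
    rw [ENNReal.rpow_inv_le_iff hγ, ENNReal.div_le_iff hK₀ hK, mul_comm]
  rw [key, le_infEDist]
  exact fun y hy => (key _).1 (h y hy)

theorem ofReal_le_ofReal_mul_infEDist_rpow {α : Type*} [PseudoMetricSpace α] {x : α}
    {A : Set α} {a C γ : ℝ} (hC : 0 < C) (hγ : 0 < γ)
    (h : ∀ y ∈ A, a ≤ C * dist x y ^ γ) :
    ENNReal.ofReal a ≤ ENNReal.ofReal C * infEDist x A ^ γ := by
  refine le_mul_infEDist_rpow (by simpa using hC) ENNReal.ofReal_ne_top hγ fun y hy => ?_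
  rw [edist_dist, ENNReal.ofReal_rpow_of_nonneg dist_nonneg hγ.le,
    ← ENNReal.ofReal_mul hC.le]
  exact ENNReal.ofReal_le_ofReal (h y hy)

theorem abs_two_mul_sub_one_le_of_opposite {a b : ℝ} (hab : (a - 1 / 2) * (b - 1 / 2) ≤ 0) :
    |2 * a - 1| ≤ 2 * |a - b| := by
  rcases abs_cases (2 * a - 1) with ⟨h₁, h₁'⟩ | ⟨h₁, h₁'⟩ <;>
  rcases abs_cases (a - b) with ⟨h₂, h₂'⟩ | ⟨h₂, h₂'⟩ <;> rw [h₁, h₂] <;> nlinarith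

namespace RefinedMargin

theorem statement10_general (d : ℕ)
    (η : Pt d → ℝ)
    (γ : ℝ) (hγ : γ ∈ Set.Ioc (0 : ℝ) 1) (c : ℝ) (hc : 0 < c)
    (hHol : ∀ x ∈ cubeX d, ∀ x' ∈ cubeX d, |η x - η x'| ≤ c * dist x x' ^ γ) :
    ∀ x ∈ cubeX d, ENNReal.ofReal |2 * η x - 1| ≤ ENNReal.ofReal (2 * c) * De η x ^ γ := by
  intro x hx
  have noise_le : ∀ y ∈ cubeX d, (η x - 1 / 2) * (η y - 1 / 2) ≤ 0 →
      |2 * η x - 1| ≤ 2 * c * dist x y ^ γ := fun y hy hopp =>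
    (abs_two_mul_sub_one_le_of_opposite hopp).trans (by linarith [hHol x hx y hy])
  unfold De
  split_ifs with hxm hx1
  · refine ofReal_le_ofReal_mul_infEDist_rpow (by positivity) hγ.1 fun y hy => noise_le y hy.1 ?_
    exact mul_nonpos_of_nonpos_of_nonneg (by linarith [hxm.2]) (by linarith [hy.2])
  · refine ofReal_le_ofReal_mul_infEDist_rpow (by positivity) hγ.1 fun y hy => noise_le y hy.1 ?_
    exact mul_nonpos_of_nonneg_of_nonpos (by linarith [hx1.2]) (by linarith [hy.2])
  · have hηx : η x = 1 / 2 := by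
      simp only [Xm1, X1, mem_ofPred_eq, hx, true_and, not_lt] at hxm hx1
      linarith
    simp [hηx]

theorem statement10 (d : ℕ) (hd : 1 ≤ d)
    (μ : Measure (Pt d)) [IsProbabilityMeasure μ] (hμX : μ (cubeX d)ᶜ = 0)
    (η : Pt d → ℝ) (hη : ∀ x, η x ∈ Set.Icc (0 : ℝ) 1)
    (γ : ℝ) (hγ : γ ∈ Set.Ioc (0 : ℝ) 1) (c : ℝ) (hc : 0 < c)
    (hHol : ∀ x ∈ cubeX d, ∀ x' ∈ cubeX d, |η x - η x'| ≤ c * dist x x' ^ γ) :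
    ∀ x ∈ cubeX d, ENNReal.ofReal |2 * η x - 1| ≤ ENNReal.ofReal (2 * c) * De η x ^ γ :=
  statement10_general d η γ hγ c hc hHol

end RefinedMargin
end
end

section
/- Let X := [-1,1]^d and P a probability measure on X × {-1,1} with fixed posterior version η. If Δ_η controls the noise from below with exponent γ ∈ (0,∞) and constant c_LC, and P has ME α ∈ (0,∞] with constant c_ME, then P satisfies the noise condition with exponent q = α/γ: for all t > 0, P_X({x ∈ X : |2η(x) − 1| < t}) ≤ c_ME^α (c_LC t)^{α/γ}. -/
open MeasureTheory Set Metric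
open scoped Classical ENNReal NNReal

noncomputable section

namespace RefinedMargin

variable {d : ℕ} {s : ℝ}

theorem statement15 (d : ℕ) (hd : 1 ≤ d)
    (μ : Measure (Pt d)) [IsProbabilityMeasure μ] (hμX : μ (cubeX d)ᶜ = 0)
    (η : Pt d → ℝ) (hη : ∀ x, η x ∈ Set.Icc (0 : ℝ) 1) (hmeasη : Measurable η)
    (γ cLC : ℝ) (hγ : 0 < γ) (hcLC : 0 < cLC) (hLC : LowerControl μ η γ cLC)
    (α cME : ℝ) (hα : 0 < α) (hcME : 0 < cME) (hME : HasME μ η α cME) :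
    ∀ t : ℝ, 0 < t →
      μ {x | x ∈ cubeX d ∧ |2 * η x - 1| < t} ≤
        ENNReal.ofReal (cME ^ α * (cLC * t) ^ (α / γ)) := by
  intro t ht
  set r : ℝ := (cLC * t) ^ (1 / γ) with hr
  have hclt : 0 < cLC * t := mul_pos hcLC ht
  have hrpos : 0 < r := Real.rpow_pos_of_pos hclt _
  have hΔnn : ∀ x : Pt d, 0 ≤ Δ η x := by
    intro x
    unfold Δ
    split_ifs <;> first | exact Metric.infDist_nonneg | rfl
  have hsub : {x | x ∈ cubeX d ∧ |2 * η x - 1| < t} ≤ᵐ[μ] {x | Δ η x < r} := by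
    filter_upwards [hLC] with x hx hmem
    have h1 : Δ η x ^ γ < cLC * t :=
      lt_of_le_of_lt hx (by
        have := hmem.2
        nlinarith [abs_nonneg (2 * η x - 1)])
    have h2 : r ^ γ = cLC * t := by
      rw [hr, ← Real.rpow_mul hclt.le, one_div, inv_mul_cancel₀ hγ.ne', Real.rpow_one]
    show Δ η x < r
    by_contra hcon
    push_neg at hcon
    have := Real.rpow_le_rpow hrpos.le hcon hγ.le
    rw [h2] at this
    linarith
  calc μ {x | x ∈ cubeX d ∧ |2 * η x - 1| < t}
      ≤ μ {x | Δ η x < r} := measure_mono_ae hsub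
    _ ≤ ENNReal.ofReal ((cME * r) ^ α) := hME r hrpos
    _ = ENNReal.ofReal (cME ^ α * (cLC * t) ^ (α / γ)) := by
        congr 1
        rw [Real.mul_rpow hcME.le hrpos.le, hr, ← Real.rpow_mul hclt.le,
          one_div_mul_eq_div]

end RefinedMargin
end
end
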